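/- For every Λ ≥ 0, every R > 0, and every f ∈ (0, ∞)^{L_R*}, one has ∑_{p∈L_R*} Q^{NR}_p[f]·(−1/f_p) ≤ 0, with equality if and only if 1/f_{p₁} = 1/f_{p₂} + 1/f_{p₃} for all p₁, p₂, p₃ ∈ L_R* with p₁ = p₂ + p₃ and | |p₂| + |p₃| − |p₁| | ≤ Λ. In particular, L(f) = −∑_{p∈L_R*} log f_p is nonincreasing along every positive solution of the discrete near-resonance acoustic kinetic system. -/

import Mathlib

open scoped BigOperators Classical

/-- Euclidean norm of a point of the integer lattice `ℤ³`. -/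
noncomputable def enorm3 (p : Fin 3 → ℤ) : ℝ := Real.sqrt (∑ i, ((p i : ℝ))^2)

/-- The truncated lattice `L_R* = {p ∈ ℤ³ : 0 < |p| < R}` (as a finite set). -/
noncomputable def latticeBall (R : ℝ) : Finset (Fin 3 → ℤ) :=
  (Finset.Icc (fun _ => (-⌈R⌉ : ℤ)) (fun _ => (⌈R⌉ : ℤ))).filter
    (fun p => 0 < enorm3 p ∧ enorm3 p < R)

/-- Right-hand side of the discrete exact-resonance acoustic wave kinetic system, with
kernel `V_{p₁,p₂,p₃} = |p₁||p₂||p₃|` and phonon dispersion `ω(p) = |p|`. -/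
noncomputable def Qres (R : ℝ) (f : (Fin 3 → ℤ) → ℝ) (p1 : Fin 3 → ℤ) : ℝ :=
  (∑ p2 ∈ latticeBall R, ∑ p3 ∈ latticeBall R,
      if p1 = p2 + p3 ∧ enorm3 p1 = enorm3 p2 + enorm3 p3 then
        enorm3 p1 * enorm3 p2 * enorm3 p3 *
          (f p2 * f p3 - f p1 * (f p2 + f p3)) else 0)
  - 2 * ∑ p2 ∈ latticeBall R, ∑ p3 ∈ latticeBall R,
      if p3 = p1 + p2 ∧ enorm3 p3 = enorm3 p1 + enorm3 p2 then
        enorm3 p1 * enorm3 p2 * enorm3 p3 *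
          (f p1 * f p2 - f p3 * (f p1 + f p2)) else 0

/-- Right-hand side of the discrete near-resonance acoustic wave kinetic system with
resonance broadening `Λ`. -/
noncomputable def QNR (R Λ : ℝ) (f : (Fin 3 → ℤ) → ℝ) (p1 : Fin 3 → ℤ) : ℝ :=
  (∑ p2 ∈ latticeBall R, ∑ p3 ∈ latticeBall R,
      if p1 = p2 + p3 ∧ |enorm3 p1 - enorm3 p2 - enorm3 p3| ≤ Λ then
        enorm3 p1 * enorm3 p2 * enorm3 p3 *
          (f p2 * f p3 - f p1 * (f p2 + f p3)) else 0)
  - 2 * ∑ p2 ∈ latticeBall R, ∑ p3 ∈ latticeBall R,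
      if p3 = p1 + p2 ∧ |enorm3 p3 - enorm3 p1 - enorm3 p2| ≤ Λ then
        enorm3 p1 * enorm3 p2 * enorm3 p3 *
          (f p1 * f p2 - f p3 * (f p1 + f p2)) else 0

/-! The weak form of the collision operator, tested against `φ = -1/f`, symmetrizes over the
three momenta of each near-resonant triad `p₁ = p₂ + p₃`. Since
`f₂ f₃ - f₁ (f₂ + f₃) = f₁ f₂ f₃ (1/f₁ - 1/f₂ - 1/f₃)`, every triad contributes
`-|p₁||p₂||p₃| f₁ f₂ f₃ (1/f₁ - 1/f₂ - 1/f₃)²`, which is nonpositive and vanishes exactly when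
`1/f₁ = 1/f₂ + 1/f₃`. Along a positive solution, this dissipation is the time derivative of
`-∑ log f_p`. -/

theorem Finset.sum_collision_mul_eq_symmetrized {ι R : Type*} [CommRing R] (s : Finset ι)
    (K : ι → ι → ι → R) (hK : ∀ a b c, K a b c = K a c b) (φ : ι → R) :
    ∑ a ∈ s, (∑ b ∈ s, ∑ c ∈ s, K a b c - 2 * ∑ b ∈ s, ∑ c ∈ s, K c a b) * φ a =
      ∑ a ∈ s, ∑ b ∈ s, ∑ c ∈ s, K a b c * (φ a - φ b - φ c) := by
  have hrotate : ∑ a ∈ s, ∑ b ∈ s, ∑ c ∈ s, K c a b * φ a =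
      ∑ a ∈ s, ∑ b ∈ s, ∑ c ∈ s, K a b c * φ b :=
    calc _ = ∑ a ∈ s, ∑ c ∈ s, ∑ b ∈ s, K c a b * φ a :=
          Finset.sum_congr rfl fun _ _ => Finset.sum_comm
      _ = _ := Finset.sum_comm
  have hswap : ∑ a ∈ s, ∑ b ∈ s, ∑ c ∈ s, K a b c * φ b =
      ∑ a ∈ s, ∑ b ∈ s, ∑ c ∈ s, K a b c * φ c :=
    calc _ = ∑ a ∈ s, ∑ c ∈ s, ∑ b ∈ s, K a b c * φ b :=
          Finset.sum_congr rfl fun _ _ => Finset.sum_comm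
      _ = _ := Finset.sum_congr rfl fun a _ => Finset.sum_congr rfl fun b _ =>
          Finset.sum_congr rfl fun c _ => by rw [hK]
  simp only [sub_mul, mul_sub, Finset.sum_sub_distrib, Finset.sum_mul, mul_assoc,
    ← Finset.mul_sum, hrotate]
  rw [hswap]
  ring

theorem Finset.sum_sum_sum_eq_zero_iff_of_nonneg {ι M : Type*}
    [AddCommMonoid M] [PartialOrder M] [IsOrderedAddMonoid M] {s : Finset ι} {g : ι → ι → ι → M}
    (hg : ∀ a ∈ s, ∀ b ∈ s, ∀ c ∈ s, 0 ≤ g a b c) :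
    ∑ a ∈ s, ∑ b ∈ s, ∑ c ∈ s, g a b c = 0 ↔ ∀ a ∈ s, ∀ b ∈ s, ∀ c ∈ s, g a b c = 0 := by
  have hg₂ : ∀ a ∈ s, ∀ b ∈ s, 0 ≤ ∑ c ∈ s, g a b c := fun a ha b hb =>
    Finset.sum_nonneg (hg a ha b hb)
  rw [Finset.sum_eq_zero_iff_of_nonneg fun a ha => Finset.sum_nonneg (hg₂ a ha)]
  refine forall₂_congr fun a ha => ?_
  rw [Finset.sum_eq_zero_iff_of_nonneg (hg₂ a ha)]
  exact forall₂_congr fun b hb => Finset.sum_eq_zero_iff_of_nonneg (hg a ha b hb)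

theorem antitoneOn_neg_sum_log_of_dissipation {ι : Type*} (s : Finset ι)
    (Q : (ι → ℝ) → ι → ℝ) (g : ℝ → ι → ℝ)
    (hg : ∀ p ∈ s, ∀ t : ℝ, 0 ≤ t → HasDerivAt (fun u => g u p) (Q (g t) p) t)
    (hpos : ∀ p ∈ s, ∀ t : ℝ, 0 ≤ t → 0 < g t p)
    (hdiss : ∀ t : ℝ, 0 ≤ t → ∑ p ∈ s, Q (g t) p * (-(1 / g t p)) ≤ 0) :
    AntitoneOn (fun t => -∑ p ∈ s, Real.log (g t p)) (Set.Ici 0) := by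
  have hderiv : ∀ t : ℝ, 0 ≤ t → HasDerivAt (fun u => -∑ p ∈ s, Real.log (g u p))
      (∑ p ∈ s, Q (g t) p * (-(1 / g t p))) t := by
    intro t ht
    simp only [← Finset.sum_neg_distrib]
    refine HasDerivAt.fun_sum fun p hp => ?_
    exact ((hg p hp t ht).log (hpos p hp t ht).ne').neg.congr_deriv (by ring)
  refine antitoneOn_of_hasDerivWithinAt_nonpos (convex_Ici 0)
    (fun t ht => (hderiv t ht).continuousAt.continuousWithinAt)
    (fun t ht => (hderiv t (interior_subset ht)).hasDerivWithinAt)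
    (fun t ht => hdiss t (interior_subset ht))

lemma enorm3_nonneg (p : Fin 3 → ℤ) : 0 ≤ enorm3 p := Real.sqrt_nonneg _

lemma enorm3_pos_of_mem_latticeBall {R : ℝ} {p : Fin 3 → ℤ} (hp : p ∈ latticeBall R) :
    0 < enorm3 p :=
  (Finset.mem_filter.mp hp).2.1

def NearResonant (Λ : ℝ) (p₁ p₂ p₃ : Fin 3 → ℤ) : Prop :=
  p₁ = p₂ + p₃ ∧ |enorm3 p₁ - enorm3 p₂ - enorm3 p₃| ≤ Λ

lemma nearResonant_iff {Λ : ℝ} {p₁ p₂ p₃ : Fin 3 → ℤ} :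
    NearResonant Λ p₁ p₂ p₃ ↔ p₁ = p₂ + p₃ ∧ |enorm3 p₂ + enorm3 p₃ - enorm3 p₁| ≤ Λ := by
  rw [NearResonant, sub_sub, abs_sub_comm]

lemma nearResonant_comm {Λ : ℝ} {p₁ p₂ p₃ : Fin 3 → ℤ} :
    NearResonant Λ p₁ p₂ p₃ ↔ NearResonant Λ p₁ p₃ p₂ := by
  rw [NearResonant, NearResonant, add_comm p₃, sub_right_comm]

noncomputable def collisionRate (Λ : ℝ) (f : (Fin 3 → ℤ) → ℝ) (p₁ p₂ p₃ : Fin 3 → ℤ) : ℝ :=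
  if NearResonant Λ p₁ p₂ p₃ then
    enorm3 p₁ * enorm3 p₂ * enorm3 p₃ * (f p₂ * f p₃ - f p₁ * (f p₂ + f p₃))
  else 0

lemma collisionRate_comm (Λ : ℝ) (f : (Fin 3 → ℤ) → ℝ) (p₁ p₂ p₃ : Fin 3 → ℤ) :
    collisionRate Λ f p₁ p₂ p₃ = collisionRate Λ f p₁ p₃ p₂ := by
  unfold collisionRate
  exact if_congr nearResonant_comm (by ring) rfl

lemma QNR_eq_sum_collisionRate (R Λ : ℝ) (f : (Fin 3 → ℤ) → ℝ) (p : Fin 3 → ℤ) :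
    QNR R Λ f p =
      ∑ b ∈ latticeBall R, ∑ c ∈ latticeBall R, collisionRate Λ f p b c -
        2 * ∑ b ∈ latticeBall R, ∑ c ∈ latticeBall R, collisionRate Λ f c p b := by
  rw [QNR]
  congr 1 <;> [skip; congr 1] <;>
    exact Finset.sum_congr rfl fun _ _ => Finset.sum_congr rfl fun _ _ => by
      unfold collisionRate NearResonant
      split_ifs <;> ring

noncomputable def dissipationRate (Λ : ℝ) (f : (Fin 3 → ℤ) → ℝ) (p₁ p₂ p₃ : Fin 3 → ℤ) : ℝ :=
  if NearResonant Λ p₁ p₂ p₃ then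
    enorm3 p₁ * enorm3 p₂ * enorm3 p₃ * (f p₁ * f p₂ * f p₃) *
      (1 / f p₁ - 1 / f p₂ - 1 / f p₃) ^ 2
  else 0

lemma sum_QNR_mul_neg_inv (R Λ : ℝ) (f : (Fin 3 → ℤ) → ℝ)
    (hf : ∀ p ∈ latticeBall R, f p ≠ 0) :
    ∑ p ∈ latticeBall R, QNR R Λ f p * (-(1 / f p)) =
      -∑ a ∈ latticeBall R, ∑ b ∈ latticeBall R, ∑ c ∈ latticeBall R,
        dissipationRate Λ f a b c := by
  simp only [QNR_eq_sum_collisionRate,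
    Finset.sum_collision_mul_eq_symmetrized _ _ (collisionRate_comm Λ f), ← Finset.sum_neg_distrib]
  refine Finset.sum_congr rfl fun a ha => Finset.sum_congr rfl fun b hb =>
    Finset.sum_congr rfl fun c hc => ?_
  unfold collisionRate dissipationRate
  split_ifs
  · field_simp [hf a ha, hf b hb, hf c hc]
    ring
  · simp

section
variable {R Λ : ℝ} {f : (Fin 3 → ℤ) → ℝ} (hf : ∀ p ∈ latticeBall R, 0 < f p)
  {a b c : Fin 3 → ℤ} (ha : a ∈ latticeBall R) (hb : b ∈ latticeBall R) (hc : c ∈ latticeBall R)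
include hf ha hb hc

lemma dissipationRate_nonneg : 0 ≤ dissipationRate Λ f a b c := by
  unfold dissipationRate
  split_ifs
  · have := hf a ha
    have := hf b hb
    have := hf c hc
    have := enorm3_nonneg a
    have := enorm3_nonneg b
    have := enorm3_nonneg c
    positivity
  · rfl

lemma dissipationRate_eq_zero_iff :
    dissipationRate Λ f a b c = 0 ↔ (NearResonant Λ a b c → 1 / f a = 1 / f b + 1 / f c) := by
  have hweight : 0 < enorm3 a * enorm3 b * enorm3 c * (f a * f b * f c) := by
    have := hf a ha
    have := hf b hb
    have := hf c hc
    have := enorm3_pos_of_mem_latticeBall ha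
    have := enorm3_pos_of_mem_latticeBall hb
    have := enorm3_pos_of_mem_latticeBall hc
    positivity
  unfold dissipationRate
  split_ifs with h
  · simp only [h, true_imp_iff, mul_eq_zero, hweight.ne', false_or, pow_eq_zero_iff two_ne_zero]
    rw [sub_sub, sub_eq_zero]
  · simp only [h, false_imp_iff]

end

lemma sum_QNR_mul_neg_inv_nonpos {R Λ : ℝ} {f : (Fin 3 → ℤ) → ℝ}
    (hf : ∀ p ∈ latticeBall R, 0 < f p) :
    ∑ p ∈ latticeBall R, QNR R Λ f p * (-(1 / f p)) ≤ 0 := by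
  rw [sum_QNR_mul_neg_inv R Λ f fun p hp => (hf p hp).ne', neg_nonpos]
  exact Finset.sum_nonneg fun a ha => Finset.sum_nonneg fun b hb =>
    Finset.sum_nonneg fun c hc => dissipationRate_nonneg hf ha hb hc

theorem lyapunov_dissipation_near_resonance_general (R Λ : ℝ)
    (f : (Fin 3 → ℤ) → ℝ) (hf : ∀ p ∈ latticeBall R, 0 < f p) :
    (∑ p ∈ latticeBall R, QNR R Λ f p * (-(1 / f p)) ≤ 0) ∧
    ((∑ p ∈ latticeBall R, QNR R Λ f p * (-(1 / f p)) = 0) ↔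
      ∀ p1 ∈ latticeBall R, ∀ p2 ∈ latticeBall R, ∀ p3 ∈ latticeBall R,
        p1 = p2 + p3 → |enorm3 p2 + enorm3 p3 - enorm3 p1| ≤ Λ →
          1 / f p1 = 1 / f p2 + 1 / f p3) ∧
    (∀ g : ℝ → (Fin 3 → ℤ) → ℝ,
      (∀ p ∈ latticeBall R, ∀ t : ℝ, 0 ≤ t →
        HasDerivAt (fun s => g s p) (QNR R Λ (g t) p) t) →
      (∀ p ∈ latticeBall R, ∀ t : ℝ, 0 ≤ t → 0 < g t p) →
      ∀ s t : ℝ, 0 ≤ s → s ≤ t →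
        -∑ p ∈ latticeBall R, Real.log (g t p) ≤
          -∑ p ∈ latticeBall R, Real.log (g s p)) := by
  refine ⟨sum_QNR_mul_neg_inv_nonpos hf, ?_, fun g hg hpos s t hs hst => ?_⟩
  · rw [sum_QNR_mul_neg_inv R Λ f fun p hp => (hf p hp).ne', neg_eq_zero,
      Finset.sum_sum_sum_eq_zero_iff_of_nonneg fun a ha b hb c hc =>
        dissipationRate_nonneg hf ha hb hc]
    refine forall₂_congr fun a ha => forall₂_congr fun b hb => forall₂_congr fun c hc => ?_
    rw [dissipationRate_eq_zero_iff hf ha hb hc, nearResonant_iff, and_imp]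
  · exact antitoneOn_neg_sum_log_of_dissipation _ (QNR R Λ) g hg hpos
      (fun t ht => sum_QNR_mul_neg_inv_nonpos fun p hp => hpos p hp t ht)
      hs (hs.trans hst) hst

/-- Lyapunov dissipation for the discrete near-resonance acoustic kinetic system:
`∑_{p∈L_R*} Q^{NR}_p[f]·(−1/f_p) ≤ 0` on the positive orthant, with equality iff
`1/f_{p₁} = 1/f_{p₂} + 1/f_{p₃}` for all near-resonant triples; in particular
`L(f) = −∑_p log f_p` is nonincreasing along every positive solution. -/
theorem lyapunov_dissipation_near_resonance (R Λ : ℝ) (hR : 0 < R) (hΛ : 0 ≤ Λ)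
    (f : (Fin 3 → ℤ) → ℝ) (hf : ∀ p ∈ latticeBall R, 0 < f p) :
    (∑ p ∈ latticeBall R, QNR R Λ f p * (-(1 / f p)) ≤ 0) ∧
    ((∑ p ∈ latticeBall R, QNR R Λ f p * (-(1 / f p)) = 0) ↔
      ∀ p1 ∈ latticeBall R, ∀ p2 ∈ latticeBall R, ∀ p3 ∈ latticeBall R,
        p1 = p2 + p3 → |enorm3 p2 + enorm3 p3 - enorm3 p1| ≤ Λ →
          1 / f p1 = 1 / f p2 + 1 / f p3) ∧
    (∀ g : ℝ → (Fin 3 → ℤ) → ℝ,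
      (∀ p ∈ latticeBall R, ∀ t : ℝ, 0 ≤ t →
        HasDerivAt (fun s => g s p) (QNR R Λ (g t) p) t) →
      (∀ p ∈ latticeBall R, ∀ t : ℝ, 0 ≤ t → 0 < g t p) →
      ∀ s t : ℝ, 0 ≤ s → s ≤ t →
        -∑ p ∈ latticeBall R, Real.log (g t p) ≤
          -∑ p ∈ latticeBall R, Real.log (g s p)) :=
  lyapunov_dissipation_near_resonance_general R Λ f hf
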